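/- arXiv:1910.00372 — 2 statements merged into one kernel-verified Lean document; each statement's English description precedes it below -/
import Mathlib

section
/- Let B be a real m×n matrix with m ≥ n and rank(B) = n, let x* ∈ int(ℝ₊ⁿ), and let c₁,…,c_m > 0. Then the function W(x) = Σ_{i=1}^m cᵢ [ φᵢ(x) − φᵢ(x*) − φᵢ(x*)·ln( φᵢ(x)/φᵢ(x*) ) ] satisfies W(x*) = 0 and W(x) > 0 for every x ∈ int(ℝ₊ⁿ) with x ≠ x*. -/
open Matrix Finset

/-- Quasimonomials: `φᵢ(x) = ∏ⱼ xⱼ ^ Bᵢⱼ` (real exponents). -/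
noncomputable def phi {n m : ℕ} (B : Matrix (Fin m) (Fin n) ℝ) (x : Fin n → ℝ) :
    Fin m → ℝ :=
  fun i => ∏ j, (x j) ^ (B i j)

lemma phi_pos {n m : ℕ} (B : Matrix (Fin m) (Fin n) ℝ) (x : Fin n → ℝ)
    (hx : ∀ i, 0 < x i) (i : Fin m) : 0 < phi B x i :=
  Finset.prod_pos fun j _ => Real.rpow_pos_of_pos (hx j) _

lemma log_phi {n m : ℕ} (B : Matrix (Fin m) (Fin n) ℝ) (x : Fin n → ℝ)
    (hx : ∀ i, 0 < x i) (i : Fin m) :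
    Real.log (phi B x i) = B.mulVec (fun j => Real.log (x j)) i := by
  unfold phi Matrix.mulVec dotProduct
  rw [Real.log_prod (fun j _ => (Real.rpow_pos_of_pos (hx j) _).ne')]
  exact Finset.sum_congr rfl fun j _ => by
    rw [Real.log_rpow (hx j), mul_comm]

/-- For a real `m×n` matrix `B` with `m ≥ n`, `rank B = n`, a point
`x* ∈ int(ℝ₊ⁿ)` and positive constants `cᵢ`, the function
`W(x) = ∑ᵢ cᵢ (φᵢ(x) − φᵢ(x*) − φᵢ(x*)·ln(φᵢ(x)/φᵢ(x*)))` vanishes at `x*` and is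
strictly positive at every other point of the open positive orthant. -/
theorem qp_liapunov_positive {n m : ℕ} (hmn : n ≤ m)
    (B : Matrix (Fin m) (Fin n) ℝ) (hB : B.rank = n)
    (xs : Fin n → ℝ) (hxs : ∀ i, 0 < xs i)
    (c : Fin m → ℝ) (hc : ∀ i, 0 < c i) :
    (∑ i, c i * (phi B xs i - phi B xs i -
        phi B xs i * Real.log (phi B xs i / phi B xs i)) = 0) ∧
    (∀ x : Fin n → ℝ, (∀ i, 0 < x i) → x ≠ xs →
      0 < ∑ i, c i * (phi B x i - phi B xs i -
        phi B xs i * Real.log (phi B x i / phi B xs i))) := by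
  have hps : ∀ i, 0 < phi B xs i := phi_pos B xs hxs
  constructor
  · apply Finset.sum_eq_zero
    intro i _
    rw [div_self (hps i).ne', Real.log_one]
    ring
  · intro x hx hne
    have hpx : ∀ i, 0 < phi B x i := phi_pos B x hx
    -- each term is nonneg; positive iff phi B x i ≠ phi B xs i
    have hterm : ∀ i, phi B x i ≠ phi B xs i →
        0 < phi B x i - phi B xs i - phi B xs i * Real.log (phi B x i / phi B xs i) := by
      intro i hne'
      have ht : 0 < phi B x i / phi B xs i := div_pos (hpx i) (hps i)
      have ht1 : phi B x i / phi B xs i ≠ 1 := by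
        intro h
        exact hne' (div_eq_one_iff_eq (hps i).ne' |>.mp h)
      have := Real.log_lt_sub_one_of_pos ht ht1
      have h2 : phi B xs i * Real.log (phi B x i / phi B xs i) <
          phi B xs i * (phi B x i / phi B xs i - 1) :=
        (mul_lt_mul_iff_right₀ (hps i)).mpr this
      have h3 : phi B xs i * (phi B x i / phi B xs i - 1) = phi B x i - phi B xs i := by
        rw [mul_sub, mul_div_cancel₀ _ (hps i).ne', mul_one]
      linarith
    have hterm0 : ∀ i, 0 ≤ phi B x i - phi B xs i -
        phi B xs i * Real.log (phi B x i / phi B xs i) := by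
      intro i
      by_cases h : phi B x i = phi B xs i
      · rw [h, div_self (hps i).ne', Real.log_one]; simp
      · exact (hterm i h).le
    -- existence of i with phi differing
    have hex : ∃ i, phi B x i ≠ phi B xs i := by
      by_contra h
      push_neg at h
      apply hne
      -- B.mulVec (log x) = B.mulVec (log xs)
      have hlog : B.mulVec (fun j => Real.log (x j)) = B.mulVec (fun j => Real.log (xs j)) := by
        funext i
        rw [← log_phi B x hx i, ← log_phi B xs hxs i, h i]
      -- injectivity from rank
      have hinj : Function.Injective B.mulVecLin := by
        rw [← LinearMap.ker_eq_bot]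
        rw [Matrix.rank] at hB
        have hrn := B.mulVecLin.finrank_range_add_finrank_ker
        rw [hB] at hrn
        simp only [Module.finrank_fintype_fun_eq_card, Fintype.card_fin] at hrn
        have : Module.finrank ℝ (LinearMap.ker B.mulVecLin) = 0 := by omega
        exact Submodule.finrank_eq_zero.mp this
      have := hinj hlog
      funext j
      have hj : Real.log (x j) = Real.log (xs j) := congrFun this j
      have := Real.log_injOn_pos (Set.mem_Ioi.mpr (hx j)) (Set.mem_Ioi.mpr (hxs j)) hj
      exact this
    obtain ⟨i0, hi0⟩ := hex
    apply Finset.sum_pos'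
    · intro i _
      exact mul_nonneg (hc i).le (hterm0 i)
    · exact ⟨i0, Finset.mem_univ i0, mul_pos (hc i0) (hterm i0 hi0)⟩
end

section
/- Let x* ∈ int(ℝ₊ⁿ) be an equilibrium of the Lotka-Volterra system, and suppose there exist c₁,…,c_n > 0 such that, with C = diag(c₁,…,c_n), the matrix C·A + Aᵀ·C is negative definite. Then x* is globally asymptotically stable in int(ℝ₊ⁿ): x* is Lyapunov stable, and every solution x : [0,∞) → int(ℝ₊ⁿ) of the Lotka-Volterra system satisfies x(t) → x* as t → ∞. -/
open Matrix Finset Filter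

noncomputable def Vterm (a s : ℝ) : ℝ := s - a - a * Real.log (s / a)

noncomputable def Vfun {n : ℕ} (c xs : Fin n → ℝ) (z : Fin n → ℝ) : ℝ :=
  ∑ i, c i * Vterm (xs i) (z i)

noncomputable def qf {n : ℕ} (A : Matrix (Fin n) (Fin n) ℝ) (c xs : Fin n → ℝ)
    (z : Fin n → ℝ) : ℝ :=
  ∑ i, c i * (z i - xs i) * ∑ j, A i j * (z j - xs j)

lemma Vterm_self {a : ℝ} (ha : 0 < a) : Vterm a a = 0 := by
  simp [Vterm, div_self ha.ne']

lemma Vterm_nonneg {a s : ℝ} (ha : 0 < a) (hs : 0 < s) : 0 ≤ Vterm a s := by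
  have h := Real.log_le_sub_one_of_pos (x := s / a) (by positivity)
  have h2 : a * Real.log (s / a) ≤ a * (s / a - 1) := by nlinarith
  have h3 : a * (s / a - 1) = s - a := by field_simp
  unfold Vterm; nlinarith

lemma Vterm_pos {a s : ℝ} (ha : 0 < a) (hs : 0 < s) (hne : s ≠ a) : 0 < Vterm a s := by
  have hne1 : s / a ≠ 1 := by
    intro h
    exact hne (by field_simp at h; linarith)
  have h := Real.log_lt_sub_one_of_pos (x := s / a) (by positivity) hne1
  have h2 : a * Real.log (s / a) < a * (s / a - 1) := (mul_lt_mul_iff_right₀ ha).mpr h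
  have h3 : a * (s / a - 1) = s - a := by field_simp
  unfold Vterm; nlinarith

lemma Vterm_lower {a B s : ℝ} (ha : 0 < a) (hs : 0 < s) (hV : Vterm a s ≤ B) :
    a * Real.exp (-((B + a) / a)) ≤ s := by
  have hlog : Real.log (s / a) = Real.log s - Real.log a := Real.log_div hs.ne' ha.ne'
  unfold Vterm at hV; rw [hlog] at hV
  have h1 : Real.log a - Real.log s ≤ (B + a) / a := by
    rw [le_div_iff₀ ha]; nlinarith
  have h2 : Real.log a - (B + a) / a ≤ Real.log s := by linarith
  calc a * Real.exp (-((B + a) / a)) = Real.exp (Real.log a - (B + a) / a) := by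
        rw [sub_eq_add_neg, Real.exp_add, Real.exp_log ha]
    _ ≤ Real.exp (Real.log s) := Real.exp_le_exp.mpr h2
    _ = s := Real.exp_log hs

lemma Vterm_upper {a B s : ℝ} (ha : 0 < a) (hB : 0 ≤ B) (hs : 0 < s) (hV : Vterm a s ≤ B) :
    s ≤ (Real.sqrt a + Real.sqrt B) ^ 2 := by
  have hsa : Real.sqrt a * Real.sqrt a = a := Real.mul_self_sqrt ha.le
  have hss : Real.sqrt s * Real.sqrt s = s := Real.mul_self_sqrt hs.le
  have hsb : Real.sqrt B * Real.sqrt B = B := Real.mul_self_sqrt hB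
  have hsa0 : 0 < Real.sqrt a := Real.sqrt_pos.mpr ha
  have hss0 : 0 < Real.sqrt s := Real.sqrt_pos.mpr hs
  have hsb0 : 0 ≤ Real.sqrt B := Real.sqrt_nonneg B
  have hlog1 : Real.log (s / a) = 2 * Real.log (Real.sqrt (s / a)) := by
    rw [Real.log_sqrt (by positivity)]; ring
  have hlog2 : Real.log (Real.sqrt (s / a)) ≤ Real.sqrt (s / a) - 1 :=
    Real.log_le_sub_one_of_pos (Real.sqrt_pos.mpr (by positivity))
  have hdiv : Real.sqrt (s / a) = Real.sqrt s / Real.sqrt a := Real.sqrt_div hs.le a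
  have hda : a * (Real.sqrt s / Real.sqrt a) = Real.sqrt a * Real.sqrt s := by
    field_simp
    nlinarith
  have hVt : s - a - a * Real.log (s / a) ≤ B := hV
  have hmul : a * Real.log (s / a) ≤ 2 * (Real.sqrt a * Real.sqrt s) - 2 * a := by
    rw [hlog1]
    have : Real.log (Real.sqrt (s / a)) ≤ Real.sqrt s / Real.sqrt a - 1 := by
      rw [← hdiv]; exact hlog2
    nlinarith [hda]
  have hkey : (Real.sqrt s - Real.sqrt a) ^ 2 ≤ B := by nlinarith
  have h1 : Real.sqrt s ≤ Real.sqrt a + Real.sqrt B := by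
    nlinarith [hkey, hsb, hsb0, hss0, hsa0]
  nlinarith [h1, hss, hss0, hsa0, hsb0]

lemma Vfun_self {n : ℕ} (c : Fin n → ℝ) {xs : Fin n → ℝ} (hxs : ∀ i, 0 < xs i) :
    Vfun c xs xs = 0 := by
  unfold Vfun
  rw [Finset.sum_eq_zero]
  intro i _
  rw [Vterm_self (hxs i), mul_zero]

lemma Vfun_nonneg {n : ℕ} {c xs z : Fin n → ℝ} (hc : ∀ i, 0 ≤ c i)
    (hxs : ∀ i, 0 < xs i) (hz : ∀ i, 0 < z i) : 0 ≤ Vfun c xs z :=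
  Finset.sum_nonneg fun i _ => mul_nonneg (hc i) (Vterm_nonneg (hxs i) (hz i))

lemma Vfun_pos {n : ℕ} {c xs z : Fin n → ℝ} (hc : ∀ i, 0 < c i)
    (hxs : ∀ i, 0 < xs i) (hz : ∀ i, 0 < z i) (hne : z ≠ xs) : 0 < Vfun c xs z := by
  obtain ⟨i, hi⟩ := Function.ne_iff.mp hne
  exact Finset.sum_pos'
    (fun j _ => mul_nonneg (hc j).le (Vterm_nonneg (hxs j) (hz j)))
    ⟨i, Finset.mem_univ i, mul_pos (hc i) (Vterm_pos (hxs i) (hz i) hi)⟩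

lemma Vfun_contAt {n : ℕ} {c xs z : Fin n → ℝ} (hxs : ∀ i, 0 < xs i)
    (hz : ∀ i, 0 < z i) : ContinuousAt (Vfun c xs) z := by
  unfold Vfun
  apply tendsto_finset_sum
  intro i _
  apply ContinuousAt.mul continuousAt_const
  unfold Vterm
  apply ContinuousAt.sub
  · exact ((continuous_apply i).continuousAt).sub continuousAt_const
  · apply ContinuousAt.mul continuousAt_const
    have hne := (hxs i).ne'
    have h1 : ContinuousAt (fun w : Fin n → ℝ => w i / xs i) z :=
      ContinuousAt.div₀ (continuousAt_apply i z) continuousAt_const hne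
    have h2 : ContinuousAt (Real.log ∘ fun w : Fin n → ℝ => w i / xs i) z :=
      ContinuousAt.comp (Real.continuousAt_log (div_pos (hz i) (hxs i)).ne') h1
    exact h2

lemma qf_cont {n : ℕ} (A : Matrix (Fin n) (Fin n) ℝ) (c xs : Fin n → ℝ) :
    Continuous (qf A c xs) := by
  unfold qf
  apply continuous_finset_sum
  intro i _
  exact ((continuous_const.mul ((continuous_apply i).sub continuous_const)).mul
    (continuous_finset_sum _ fun j _ =>
      continuous_const.mul ((continuous_apply j).sub continuous_const)))

lemma qf_eq_quadratic {n : ℕ} (A : Matrix (Fin n) (Fin n) ℝ) (c xs z : Fin n → ℝ) :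
    (fun i => z i - xs i) ⬝ᵥ ((Matrix.diagonal c * A + Aᵀ * Matrix.diagonal c).mulVec
      (fun i => z i - xs i)) = 2 * qf A c xs z := by
  have lhs_eq : (fun i => z i - xs i) ⬝ᵥ ((Matrix.diagonal c * A + Aᵀ * Matrix.diagonal c).mulVec
      (fun i => z i - xs i))
      = (∑ i, ∑ j, c i * A i j * ((z i - xs i) * (z j - xs j)))
        + ∑ i, ∑ j, A j i * c j * ((z i - xs i) * (z j - xs j)) := by
    simp only [dotProduct, Matrix.mulVec, Matrix.add_apply, Matrix.diagonal_mul,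
      Matrix.mul_diagonal, Matrix.transpose_apply]
    rw [← Finset.sum_add_distrib]
    refine Finset.sum_congr rfl fun i _ => ?_
    rw [Finset.mul_sum, ← Finset.sum_add_distrib]
    refine Finset.sum_congr rfl fun j _ => by ring
  have swap : ∑ i, ∑ j, A j i * c j * ((z i - xs i) * (z j - xs j))
      = ∑ i, ∑ j, c i * A i j * ((z i - xs i) * (z j - xs j)) := by
    rw [Finset.sum_comm]
    exact Finset.sum_congr rfl fun i _ => Finset.sum_congr rfl fun j _ => by ring
  have rhs_eq : qf A c xs z = ∑ i, ∑ j, c i * A i j * ((z i - xs i) * (z j - xs j)) := by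
    unfold qf
    refine Finset.sum_congr rfl fun i _ => ?_
    rw [Finset.mul_sum]
    exact Finset.sum_congr rfl fun j _ => by ring
  rw [lhs_eq, swap, rhs_eq]; ring

lemma qf_neg {n : ℕ} {A : Matrix (Fin n) (Fin n) ℝ} {c xs : Fin n → ℝ}
    (hneg : ∀ v : Fin n → ℝ, v ≠ 0 →
      v ⬝ᵥ ((Matrix.diagonal c * A + Aᵀ * Matrix.diagonal c).mulVec v) < 0)
    {z : Fin n → ℝ} (hz : z ≠ xs) : qf A c xs z < 0 := by
  have hu : (fun i => z i - xs i) ≠ (0 : Fin n → ℝ) := by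
    intro h
    apply hz
    funext i
    have := congrFun h i
    simpa [sub_eq_zero] using this
  have h := hneg _ hu
  rw [qf_eq_quadratic] at h
  linarith

lemma Vfun_hasDeriv {n : ℕ} (A : Matrix (Fin n) (Fin n) ℝ) (lam c xs : Fin n → ℝ)
    (hxs : ∀ i, 0 < xs i)
    (hlam : ∀ i, lam i + ∑ j, A i j * xs j = 0)
    (x : ℝ → Fin n → ℝ)
    (hpos : ∀ t ∈ Set.Ici (0:ℝ), ∀ i, 0 < x t i)
    (hder : ∀ t ∈ Set.Ici (0:ℝ), ∀ i, HasDerivWithinAt (fun s => x s i)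
      (x t i * (lam i + ∑ j, A i j * x t j)) (Set.Ici 0) t)
    {t : ℝ} (ht : t ∈ Set.Ici (0:ℝ)) :
    HasDerivWithinAt (fun s => Vfun c xs (x s)) (qf A c xs (x t)) (Set.Ici 0) t := by
  have hxt : ∀ i, 0 < x t i := hpos t ht
  have key : ∀ i : Fin n, HasDerivWithinAt (fun s => c i * Vterm (xs i) (x s i))
      (c i * (x t i - xs i) * ∑ j, A i j * (x t j - xs j)) (Set.Ici 0) t := by
    intro i
    have hi := hder t ht i
    have hlog : HasDerivWithinAt (fun s => Real.log (x s i / xs i))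
        ((x t i * (lam i + ∑ j, A i j * x t j) / xs i) / (x t i / xs i)) (Set.Ici 0) t :=
      (hi.div_const (xs i)).log (div_pos (hxt i) (hxs i)).ne'
    have hterm := ((hi.sub_const (xs i)).sub (hlog.const_mul (xs i))).const_mul (c i)
    have h2 : HasDerivWithinAt (fun s => c i * Vterm (xs i) (x s i))
        (c i * ((x t i * (lam i + ∑ j, A i j * x t j)) -
          xs i * (x t i * (lam i + ∑ j, A i j * x t j) / xs i / (x t i / xs i))))
        (Set.Ici 0) t := hterm
    have hE : lam i + ∑ j, A i j * x t j = ∑ j, A i j * (x t j - xs j) := by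
      have h0 := hlam i
      simp only [mul_sub, Finset.sum_sub_distrib]
      linarith
    convert h2 using 1
    rw [← hE]
    have hx0 : x t i ≠ 0 := (hxt i).ne'
    have hxs0 : xs i ≠ 0 := (hxs i).ne'
    field_simp
  have hsum := HasDerivWithinAt.fun_sum (u := Finset.univ) (fun i _ => key i)
  exact hsum

lemma V_antitone_aux {n : ℕ} (A : Matrix (Fin n) (Fin n) ℝ) (lam c xs : Fin n → ℝ)
    (hxs : ∀ i, 0 < xs i)
    (hlam : ∀ i, lam i + ∑ j, A i j * xs j = 0)
    (x : ℝ → Fin n → ℝ)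
    (hpos : ∀ t ∈ Set.Ici (0:ℝ), ∀ i, 0 < x t i)
    (hder : ∀ t ∈ Set.Ici (0:ℝ), ∀ i, HasDerivWithinAt (fun s => x s i)
      (x t i * (lam i + ∑ j, A i j * x t j)) (Set.Ici 0) t)
    (ρ : ℝ) (hρ : ∀ t ∈ Set.Ici (0:ℝ), qf A c xs (x t) ≤ -ρ) :
    AntitoneOn (fun t => Vfun c xs (x t) + ρ * t) (Set.Ici 0) := by
  have hF : ∀ t ∈ Set.Ici (0:ℝ), HasDerivWithinAt (fun s => Vfun c xs (x s) + ρ * s)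
      (qf A c xs (x t) + ρ) (Set.Ici 0) t := by
    intro t ht
    have h1 := Vfun_hasDeriv A lam c xs hxs hlam x hpos hder ht
    have h2 : HasDerivWithinAt (fun s : ℝ => ρ * s) (ρ * 1) (Set.Ici 0) t :=
      ((hasDerivAt_id t).const_mul ρ).hasDerivWithinAt
    have := h1.add h2
    simpa [Pi.add_def] using this
  refine antitoneOn_of_hasDerivWithinAt_nonpos (convex_Ici 0)
    (fun t ht => (hF t ht).continuousWithinAt)
    (fun t ht => (hF t (interior_subset ht)).mono interior_subset)
    (fun t ht => ?_)
  rw [interior_Ici] at ht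
  have := hρ t (Set.mem_Ici.mpr (le_of_lt (Set.mem_Ioi.mp ht)))
  linarith

/-- If `x* ∈ int(ℝ₊ⁿ)` is an equilibrium of the Lotka–Volterra system
`ẋᵢ = xᵢ (λᵢ + ∑ⱼ Aᵢⱼ xⱼ)` and there are `cᵢ > 0` with `C = diag(c)` such that
`C·A + Aᵀ·C` is negative definite, then `x*` is globally asymptotically stable
in `int(ℝ₊ⁿ)`: it is Lyapunov stable and every solution `x : [0,∞) → int(ℝ₊ⁿ)`
satisfies `x(t) → x*` as `t → ∞`. -/
theorem lv_global_asymptotic_stability {n : ℕ}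
    (A : Matrix (Fin n) (Fin n) ℝ) (lam : Fin n → ℝ)
    (xs : Fin n → ℝ) (hxs : ∀ i, 0 < xs i)
    (heq : ∀ i, xs i * (lam i + ∑ j, A i j * xs j) = 0)
    (c : Fin n → ℝ) (hc : ∀ i, 0 < c i)
    (hneg : ∀ v : Fin n → ℝ, v ≠ 0 →
      v ⬝ᵥ ((Matrix.diagonal c * A + Aᵀ * Matrix.diagonal c).mulVec v) < 0) :
    (∀ ε > 0, ∃ δ > 0, ∀ x : ℝ → (Fin n → ℝ),
      (∀ t ∈ Set.Ici (0 : ℝ), ∀ i, 0 < x t i) →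
      (∀ t ∈ Set.Ici (0 : ℝ), ∀ i, HasDerivWithinAt (fun s => x s i)
        (x t i * (lam i + ∑ j, A i j * x t j)) (Set.Ici 0) t) →
      ‖x 0 - xs‖ < δ → ∀ t ≥ (0 : ℝ), ‖x t - xs‖ < ε) ∧
    (∀ x : ℝ → (Fin n → ℝ),
      (∀ t ∈ Set.Ici (0 : ℝ), ∀ i, 0 < x t i) →
      (∀ t ∈ Set.Ici (0 : ℝ), ∀ i, HasDerivWithinAt (fun s => x s i)
        (x t i * (lam i + ∑ j, A i j * x t j)) (Set.Ici 0) t) →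
      Tendsto x atTop (nhds xs)) := by
  have hlam : ∀ i, lam i + ∑ j, A i j * xs j = 0 := by
    intro i
    rcases mul_eq_zero.mp (heq i) with h | h
    · exact absurd h (hxs i).ne'
    · exact h
  have hqf_nonpos : ∀ z : Fin n → ℝ, qf A c xs z ≤ 0 := by
    intro z
    by_cases hz : z = xs
    · subst hz; simp [qf]
    · exact (qf_neg hneg hz).le
  have hmono : ∀ x : ℝ → Fin n → ℝ,
      (∀ t ∈ Set.Ici (0 : ℝ), ∀ i, 0 < x t i) →
      (∀ t ∈ Set.Ici (0 : ℝ), ∀ i, HasDerivWithinAt (fun s => x s i)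
        (x t i * (lam i + ∑ j, A i j * x t j)) (Set.Ici 0) t) →
      AntitoneOn (fun t => Vfun c xs (x t)) (Set.Ici 0) := by
    intro x hpos hder
    have h := V_antitone_aux A lam c xs hxs hlam x hpos hder 0
      (fun t _ => by simpa using hqf_nonpos (x t))
    simpa using h
  constructor
  · -- Lyapunov stability
    intro ε hε
    rcases Nat.eq_zero_or_pos n with hn | hn
    · refine ⟨1, one_pos, fun x _ _ _ t _ => ?_⟩
      subst hn
      have : x t - xs = 0 := Subsingleton.elim _ _
      rw [this, norm_zero]
      exact hε
    haveI : Nonempty (Fin n) := Fin.pos_iff_nonempty.mp hn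
    set m0 := Finset.univ.inf' Finset.univ_nonempty xs with hm0def
    have hm0 : 0 < m0 := (Finset.lt_inf'_iff Finset.univ_nonempty).mpr fun i _ => hxs i
    have hm0le : ∀ i, m0 ≤ xs i := fun i => Finset.inf'_le xs (Finset.mem_univ i)
    set ε' := min ε m0 / 2 with hε'def
    have hε'pos : 0 < ε' := by
      have := lt_min hε hm0
      positivity
    have hε'm0 : ε' < m0 := by
      have h1 : min ε m0 ≤ m0 := min_le_right _ _
      rw [hε'def]; linarith
    have hε'ε : ε' ≤ ε := by
      have h1 : min ε m0 ≤ ε := min_le_left _ _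
      have h2 : 0 ≤ min ε m0 := le_of_lt (lt_min hε hm0)
      rw [hε'def]; linarith
    -- the sphere of radius ε' around xs
    have hS_pos : ∀ z ∈ Metric.sphere xs ε', ∀ i, 0 < z i := by
      intro z hz i
      have h1 : |z i - xs i| ≤ ‖z - xs‖ := by
        simpa [Real.norm_eq_abs] using norm_le_pi_norm (z - xs) i
      have h2 : ‖z - xs‖ = ε' := by
        rw [← dist_eq_norm]; exact Metric.mem_sphere.mp hz
      have h3 := abs_le.mp (h2 ▸ h1)
      have := hm0le i
      linarith [h3.1]
    have hz0 : (fun i => xs i + ε') ∈ Metric.sphere xs ε' := by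
      rw [Metric.mem_sphere, dist_eq_norm]
      have : (fun i => xs i + ε') - xs = fun _ : Fin n => ε' := by
        funext i; simp
      rw [this]
      simp [Real.norm_eq_abs, abs_of_pos hε'pos]
    obtain ⟨zm, hzmS, hzmmin⟩ := (isCompact_sphere xs ε').exists_isMinOn
      ⟨_, hz0⟩ (fun z hz => (Vfun_contAt hxs (hS_pos z hz)).continuousWithinAt)
    have hzm_ne : zm ≠ xs := by
      intro h
      have := Metric.mem_sphere.mp hzmS
      rw [h, dist_self] at this
      exact hε'pos.ne this
    have hm : 0 < Vfun c xs zm := Vfun_pos hc hxs (hS_pos zm hzmS) hzm_ne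
    -- choose δ by continuity of V at xs
    have hVxs : Vfun c xs xs = 0 := Vfun_self c hxs
    obtain ⟨δ0, hδ0, hδ0prop⟩ := Metric.continuousAt_iff.mp (Vfun_contAt hxs hxs) _ hm
    refine ⟨min δ0 ε', lt_min hδ0 hε'pos, ?_⟩
    intro x hpos hder hx0 t ht
    have hx0' : ‖x 0 - xs‖ < ε' := lt_of_lt_of_le hx0 (min_le_right _ _)
    have hVx0 : Vfun c xs (x 0) < Vfun c xs zm := by
      have h1 : dist (x 0) xs < δ0 := by
        rw [dist_eq_norm]; exact lt_of_lt_of_le hx0 (min_le_left _ _)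
      have h2 := hδ0prop h1
      rw [hVxs, Real.dist_eq, sub_zero] at h2
      exact lt_of_le_of_lt (le_abs_self _) h2
    have hanti := hmono x hpos hder
    suffices h : ‖x t - xs‖ < ε' by linarith
    by_contra hcon
    push_neg at hcon
    have hxcont : ContinuousOn x (Set.Ici (0:ℝ)) := by
      apply continuousOn_pi.mpr
      intro i s hs
      exact (hder s hs i).continuousWithinAt
    have hfc : ContinuousOn (fun s => ‖x s - xs‖) (Set.Icc 0 t) := by
      intro s hs
      exact (((hxcont.mono (Set.Icc_subset_Ici_self)) s hs).sub
        continuousWithinAt_const).norm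
    have hmem : ε' ∈ Set.Icc (‖x 0 - xs‖) (‖x t - xs‖) := ⟨hx0'.le, hcon⟩
    obtain ⟨s, hs, hfs⟩ := intermediate_value_Icc ht hfc hmem
    have hxsS : x s ∈ Metric.sphere xs ε' := by
      rw [Metric.mem_sphere, dist_eq_norm]; exact hfs
    have h1 : Vfun c xs zm ≤ Vfun c xs (x s) := hzmmin hxsS
    have h2 : Vfun c xs (x s) ≤ Vfun c xs (x 0) :=
      hanti Set.self_mem_Ici hs.1 hs.1
    linarith
  · -- global attraction
    intro x hpos hder
    rcases Nat.eq_zero_or_pos n with hn | hn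
    · subst hn
      have : x = fun _ => xs := funext fun t => Subsingleton.elim _ _
      rw [this]
      exact tendsto_const_nhds
    set B := Vfun c xs (x 0) with hBdef
    have hx0pos := hpos 0 Set.self_mem_Ici
    have hB0 : 0 ≤ B := Vfun_nonneg (fun i => (hc i).le) hxs hx0pos
    set lo : Fin n → ℝ := fun i => xs i * Real.exp (-((B / c i + xs i) / xs i)) with hlodef
    set hi : Fin n → ℝ := fun i => (Real.sqrt (xs i) + Real.sqrt (B / c i)) ^ 2 with hhidef
    have hbox_mem : ∀ z : Fin n → ℝ, (∀ i, 0 < z i) → Vfun c xs z ≤ B →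
        ∀ i, z i ∈ Set.Icc (lo i) (hi i) := by
      intro z hz hVz i
      have hterm_le : c i * Vterm (xs i) (z i) ≤ B := by
        have h1 : c i * Vterm (xs i) (z i) ≤ Vfun c xs z :=
          Finset.single_le_sum (f := fun j => c j * Vterm (xs j) (z j))
            (fun j _ => mul_nonneg (hc j).le (Vterm_nonneg (hxs j) (hz j)))
            (Finset.mem_univ i)
        linarith
      have hV' : Vterm (xs i) (z i) ≤ B / c i := (le_div_iff₀' (hc i)).mpr hterm_le
      exact ⟨Vterm_lower (hxs i) (hz i) hV',
        Vterm_upper (hxs i) (div_nonneg hB0 (hc i).le) (hz i) hV'⟩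
    set box : Set (Fin n → ℝ) := Set.univ.pi fun i => Set.Icc (lo i) (hi i) with hboxdef
    have hbox_cpt : IsCompact box := isCompact_univ_pi fun i => isCompact_Icc
    have hbox_pos : ∀ z ∈ box, ∀ i, 0 < z i := by
      intro z hz i
      have h1 : z i ∈ Set.Icc (lo i) (hi i) := hz i (Set.mem_univ i)
      have h2 : 0 < lo i := mul_pos (hxs i) (Real.exp_pos _)
      linarith [h1.1]
    have hanti := hmono x hpos hder
    have hVle : ∀ t ∈ Set.Ici (0:ℝ), Vfun c xs (x t) ≤ B :=
      fun t ht => hanti Set.self_mem_Ici ht ht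
    have hxbox : ∀ t ∈ Set.Ici (0:ℝ), x t ∈ box := by
      intro t ht
      exact fun i _ => hbox_mem (x t) (hpos t ht) (hVle t ht) i
    -- limit of the Lyapunov function
    set W : ℝ → ℝ := fun t => Vfun c xs (x (max t 0)) with hWdef
    have hWanti : Antitone W := by
      intro s t hst
      exact hanti (le_max_right s 0) (le_max_right t 0) (max_le_max hst le_rfl)
    have hWnonneg : ∀ t, 0 ≤ W t :=
      fun t => Vfun_nonneg (fun i => (hc i).le) hxs (hpos _ (le_max_right t 0))
    have hWbdd : BddBelow (Set.range W) := ⟨0, fun y ⟨t, ht⟩ => ht ▸ hWnonneg t⟩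
    set L := ⨅ t, W t with hLdef
    have hWtend : Tendsto W atTop (nhds L) := tendsto_atTop_ciInf hWanti hWbdd
    have hL0 : 0 ≤ L := le_ciInf hWnonneg
    have hLle : ∀ t, L ≤ W t := fun t => ciInf_le hWbdd t
    -- the positive orthant
    set Ω : Set (Fin n → ℝ) := {z | ∀ i, 0 < z i} with hΩdef
    have hΩopen : IsOpen Ω := by
      have : Ω = Set.univ.pi fun _ : Fin n => Set.Ioi (0:ℝ) := by
        ext z
        simp [hΩdef, Set.mem_pi]
      rw [this]
      exact isOpen_set_pi Set.finite_univ fun i _ => isOpen_Ioi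
    have hVcontOn : ContinuousOn (Vfun c xs) Ω :=
      fun z hz => (Vfun_contAt hxs hz).continuousWithinAt
    have hLzero : L = 0 := by
      by_contra hLne
      have hLpos : 0 < L := lt_of_le_of_ne hL0 (Ne.symm hLne)
      set O : Set (Fin n → ℝ) := Ω ∩ Vfun c xs ⁻¹' Set.Iio L with hOdef
      have hOopen : IsOpen O := hVcontOn.isOpen_inter_preimage hΩopen isOpen_Iio
      set K : Set (Fin n → ℝ) := box ∩ Oᶜ with hKdef
      have hKcpt : IsCompact K := hbox_cpt.inter_right hOopen.isClosed_compl
      have hxK : ∀ t ∈ Set.Ici (0:ℝ), x t ∈ K := by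
        intro t ht
        refine ⟨hxbox t ht, ?_⟩
        intro hO
        have h1 : L ≤ Vfun c xs (x t) := by
          have h0 := hLle t
          simp only [hWdef, max_eq_left (Set.mem_Ici.mp ht)] at h0
          exact h0
        exact absurd hO.2 (not_lt.mpr h1)
      obtain ⟨z₀, hz₀K, hz₀max⟩ := hKcpt.exists_isMaxOn ⟨x 0, hxK 0 Set.self_mem_Ici⟩
        ((qf_cont A c xs).continuousOn)
      have hz₀pos : ∀ i, 0 < z₀ i := hbox_pos z₀ hz₀K.1
      have hz₀V : L ≤ Vfun c xs z₀ := by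
        by_contra h
        push_neg at h
        exact hz₀K.2 ⟨hz₀pos, h⟩
      have hz₀ne : z₀ ≠ xs := by
        intro h
        rw [h, Vfun_self c hxs] at hz₀V
        linarith
      have hρpos : 0 < -qf A c xs z₀ := by
        have := qf_neg hneg hz₀ne
        linarith
      have hq : ∀ t ∈ Set.Ici (0:ℝ), qf A c xs (x t) ≤ -(-qf A c xs z₀) := by
        intro t ht
        have h2 : qf A c xs (x t) ≤ qf A c xs z₀ := hz₀max (hxK t ht)
        linarith
      have hAnti2 := V_antitone_aux A lam c xs hxs hlam x hpos hder _ hq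
      set ρ := -qf A c xs z₀
      set t₁ := (B + 1) / ρ with ht₁def
      have ht₁pos : 0 ≤ t₁ := div_nonneg (by linarith) hρpos.le
      have h1 : Vfun c xs (x t₁) + ρ * t₁ ≤ Vfun c xs (x 0) + ρ * 0 :=
        hAnti2 Set.self_mem_Ici ht₁pos ht₁pos
      have h2 : ρ * t₁ = B + 1 := by
        rw [ht₁def, mul_div_cancel₀ _ hρpos.ne']
      have h3 : 0 ≤ Vfun c xs (x t₁) :=
        Vfun_nonneg (fun i => (hc i).le) hxs (hpos t₁ ht₁pos)
      rw [h2, mul_zero, add_zero, ← hBdef] at h1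
      linarith
    have hVtend : Tendsto (fun t => Vfun c xs (x t)) atTop (nhds 0) := by
      rw [← hLzero]
      apply hWtend.congr'
      filter_upwards [eventually_ge_atTop (0:ℝ)] with t ht
      simp only [hWdef, max_eq_left (ht : (0:ℝ) ≤ t)]
    rw [Metric.tendsto_atTop]
    intro ε hε
    set Sε : Set (Fin n → ℝ) := box ∩ {z | ε ≤ dist z xs} with hSεdef
    have hSεcpt : IsCompact Sε :=
      hbox_cpt.inter_right (isClosed_le continuous_const
        (continuous_id.dist continuous_const))
    by_cases hne : Sε.Nonempty
    · obtain ⟨zm, hzm, hzmmin⟩ := hSεcpt.exists_isMinOn hne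
        (hVcontOn.mono fun z hz => hbox_pos z hz.1)
      have hzm_ne : zm ≠ xs := by
        intro h
        have h2 : ε ≤ dist zm xs := hzm.2
        rw [h, dist_self] at h2
        linarith
      have hm : 0 < Vfun c xs zm := Vfun_pos hc hxs (hbox_pos zm hzm.1) hzm_ne
      have hev : ∀ᶠ t in atTop, Vfun c xs (x t) < Vfun c xs zm :=
        hVtend.eventually_lt_const hm
      obtain ⟨N, hN⟩ := eventually_atTop.mp (hev.and (eventually_ge_atTop 0))
      refine ⟨N, fun t htN => ?_⟩
      obtain ⟨hVlt, ht0⟩ := hN t htN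
      by_contra hd
      push_neg at hd
      have hmem : x t ∈ Sε := ⟨hxbox t ht0, hd⟩
      have h3 : Vfun c xs zm ≤ Vfun c xs (x t) := hzmmin hmem
      linarith
    · refine ⟨0, fun t ht0 => ?_⟩
      by_contra hd
      push_neg at hd
      exact hne ⟨x t, hxbox t ht0, hd⟩
end
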